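/- arXiv:2103.03194 — 6 statements merged into one kernel-verified Lean document; each statement's English description precedes it below -/
import Mathlib

section
/- Let ψ: ℝ → ℝ be differentiable with ψ odd, ψ'(r) > 0 for every r > 0, ψ(r) ≤ C(1 + r) for every r ≥ 0 (for some constant C > 0), and suppose there exist a ≥ 0, b > 0 and s ∈ (0,1] such that (a + b·r^s)·ψ'(r) ≥ 1 for every r ≥ 0. Then there exist constants c > 0 and K ≥ 0 such that ψ(r)·r ≥ c·r^{2−s} − K for every r ≥ 0. -/
/-!
Bounding `ψ'` below on `(0, r)` by its worst value `1 / (a + b r^s)`, the mean value theorem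
gives `ψ r ≥ r / (a + b r^s)`, since `ψ 0 = 0` by oddness. For `r ≥ 1` we have
`a + b r^s ≤ (a + b) r^s`, so `ψ r * r ≥ r^(2-s) / (a + b)`; for `r < 1` both `ψ r * r ≥ 0`
and `r^(2-s) ≤ 1`, so `c = K = 1 / (a + b)` work.
-/

open Set

lemma div_add_mul_rpow_le_of_one_le_mul_deriv {f : ℝ → ℝ} {a b s : ℝ}
    (hf : Differentiable ℝ f) (hf0 : f 0 = 0) (ha : 0 ≤ a) (hb : 0 < b) (hs : 0 ≤ s)
    (hderiv : ∀ t, 0 ≤ t → 1 ≤ (a + b * t ^ s) * deriv f t) {r : ℝ} (hr : 0 ≤ r) :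
    r / (a + b * r ^ s) ≤ f r := by
  have hslope : ∀ t ∈ interior (Icc 0 r), 1 / (a + b * r ^ s) ≤ deriv f t := by
    rw [interior_Icc]
    rintro t ⟨ht0, htr⟩
    have hpos : 0 < a + b * t ^ s := by have := Real.rpow_pos_of_pos ht0 s; positivity
    calc 1 / (a + b * r ^ s) ≤ 1 / (a + b * t ^ s) := by gcongr
      _ ≤ deriv f t := by rw [div_le_iff₀ hpos, mul_comm]; exact hderiv t ht0.le
  have := (convex_Icc 0 r).mul_sub_le_image_sub_of_le_deriv hf.continuous.continuousOn
    hf.differentiableOn hslope 0 (left_mem_Icc.2 hr) r (right_mem_Icc.2 hr) hr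
  simpa [hf0, div_eq_inv_mul] using this

lemma rpow_two_sub_sub_one_div_le {a b s r : ℝ} (ha : 0 ≤ a) (hb : 0 < b) (hs0 : 0 ≤ s)
    (hs2 : s ≤ 2) (hr : 0 ≤ r) :
    (r ^ (2 - s) - 1) / (a + b) ≤ r / (a + b * r ^ s) * r := by
  rcases lt_or_ge r 1 with hr1 | hr1
  · have hpow : r ^ (2 - s) ≤ 1 := Real.rpow_le_one hr hr1.le (by linarith)
    have hlhs : (r ^ (2 - s) - 1) / (a + b) ≤ 0 :=
      div_nonpos_of_nonpos_of_nonneg (by linarith) (by positivity)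
    exact hlhs.trans (by positivity)
  · have hrs : 1 ≤ r ^ s := Real.one_le_rpow hr1 hs0
    have hrpos : 0 < r := by linarith
    calc (r ^ (2 - s) - 1) / (a + b) ≤ r ^ (2 - s) / (a + b) := by gcongr; linarith
      _ = r ^ 2 / ((a + b) * r ^ s) := by
          rw [Real.rpow_sub hrpos, Real.rpow_two, div_div, mul_comm]
      _ ≤ r ^ 2 / (a + b * r ^ s) := by gcongr; nlinarith
      _ = r / (a + b * r ^ s) * r := by ring

theorem stmt0_general (ψ : ℝ → ℝ) (a b s : ℝ)
    (hdiff : Differentiable ℝ ψ)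
    (hodd : ∀ r : ℝ, ψ r = -ψ (-r))
    (ha : 0 ≤ a) (hb : 0 < b) (hs : s ∈ Set.Ioc (0:ℝ) 1)
    (hC4 : ∀ r : ℝ, 0 ≤ r → (a + b * r ^ s) * deriv ψ r ≥ 1) :
    ∃ c : ℝ, 0 < c ∧ ∃ K : ℝ, 0 ≤ K ∧
      ∀ r : ℝ, 0 ≤ r → ψ r * r ≥ c * r ^ (2 - s) - K := by
  have hψ0 : ψ 0 = 0 := by linarith [neg_zero (G := ℝ) ▸ hodd 0]
  refine ⟨1 / (a + b), by positivity, 1 / (a + b), by positivity, fun r hr => ?_⟩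
  calc 1 / (a + b) * r ^ (2 - s) - 1 / (a + b) = (r ^ (2 - s) - 1) / (a + b) := by ring
    _ ≤ r / (a + b * r ^ s) * r :=
        rpow_two_sub_sub_one_div_le ha hb hs.1.le (by linarith [hs.2]) hr
    _ ≤ ψ r * r := by
        gcongr
        exact div_add_mul_rpow_le_of_one_le_mul_deriv hdiff hψ0 ha hb hs.1.le hC4 hr

/-- Coercivity lower bound (C5) follows from (C1)-(C4) when `s ∈ (0,1]`. -/
theorem stmt0 (ψ : ℝ → ℝ) (C a b s : ℝ)
    (hdiff : Differentiable ℝ ψ)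
    (hodd : ∀ r : ℝ, ψ r = -ψ (-r))
    (hderiv_pos : ∀ r : ℝ, 0 < r → 0 < deriv ψ r)
    (hCpos : 0 < C)
    (hgrowth : ∀ r : ℝ, 0 ≤ r → ψ r ≤ C * (1 + r))
    (ha : 0 ≤ a) (hb : 0 < b) (hs : s ∈ Set.Ioc (0:ℝ) 1)
    (hC4 : ∀ r : ℝ, 0 ≤ r → (a + b * r ^ s) * deriv ψ r ≥ 1) :
    ∃ c : ℝ, 0 < c ∧ ∃ K : ℝ, 0 ≤ K ∧
      ∀ r : ℝ, 0 ≤ r → ψ r * r ≥ c * r ^ (2 - s) - K :=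
  stmt0_general ψ a b s hdiff hodd ha hb hs hC4
end

section
/- Let L > 0 and let ψ : ℝ → ℝ be continuously differentiable with ψ'(r) > 0 for every r ∈ ℝ. Let u, v : [0,L] → ℝ be continuously differentiable with u(0) = v(0) = u(L) = v(L) = 0, and set γ(λ)(x) := u'(x) + λ(v'(x) − u'(x)) for λ ∈ [0,1], x ∈ [0,L]. Then ∫₀^L (ψ(u'(x)) − ψ(v'(x)))·(u'(x) − v'(x)) dx ≥ (1/L)·(∫₀^L (u(x) − v(x))² dx) · ∫₀¹ ( ∫₀^L (ψ'(γ(λ)(x)))^{-1} dx )^{-1} dλ. -/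
/-!
Since `ψ a - ψ b = (a - b) ∫₀¹ ψ'(a + λ(b - a)) dλ`, swapping the order of integration turns the
left-hand side into `∫₀¹ ∫₀^L ψ'(γ(λ)) (u' - v')² dx dλ`. For fixed `λ` put `w = u - v` and
`g = ψ'(γ(λ)) > 0`. As `w(0) = 0`, `|w| ≤ ∫₀^L |w'|`, so `∫₀^L w² ≤ L (∫₀^L |w'|)²`; the weighted
Cauchy–Schwarz inequality `(∫ |w'|)² ≤ (∫ g w'²)(∫ g⁻¹)` then bounds the inner integral from
below by `(1/L) (∫₀^L w²) (∫₀^L g⁻¹)⁻¹`.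
-/

open Set MeasureTheory Function

theorem sq_integral_abs_le_integral_mul_sq_mul_integral_inv {α : Type*} [MeasurableSpace α]
    {μ : Measure α} {g e : α → ℝ} (hg : ∀ᵐ x ∂μ, 0 < g x) (he : Integrable e μ)
    (hge : Integrable (fun x => g x * e x ^ 2) μ) (hg' : Integrable (fun x => (g x)⁻¹) μ) :
    (∫ x, |e x| ∂μ) ^ 2 ≤ (∫ x, g x * e x ^ 2 ∂μ) * ∫ x, (g x)⁻¹ ∂μ := by
  set S := ∫ x, g x * e x ^ 2 ∂μ
  set I := ∫ x, (g x)⁻¹ ∂μ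
  set J := ∫ x, |e x| ∂μ
  -- `∫ (g |e| - t)² / g ≥ 0`, expanded as a quadratic polynomial in `t`
  have hquadratic : ∀ t : ℝ, 0 ≤ I * (t * t) + (-2 * J) * t + S := by
    intro t
    have hpointwise : ∀ᵐ x ∂μ, 2 * t * |e x| ≤ g x * e x ^ 2 + t ^ 2 * (g x)⁻¹ := by
      filter_upwards [hg] with x hx
      have hsq : g x * e x ^ 2 + t ^ 2 * (g x)⁻¹ - 2 * t * |e x|
          = (g x * |e x| - t) ^ 2 / g x := by
        rw [← sq_abs (e x)]
        field_simp
        ring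
      rw [← sub_nonneg, hsq]
      positivity
    have hint : ∫ x, 2 * t * |e x| ∂μ ≤ ∫ x, (g x * e x ^ 2 + t ^ 2 * (g x)⁻¹) ∂μ :=
      integral_mono_ae (he.abs.const_mul _) (hge.add (hg'.const_mul _)) hpointwise
    rw [integral_const_mul, integral_add hge (hg'.const_mul _), integral_const_mul] at hint
    linarith
  have hdiscrim := discrim_le_zero hquadratic
  rw [discrim] at hdiscrim
  linarith

theorem abs_le_integral_abs_deriv_of_eq_zero {a b : ℝ} {w w' : ℝ → ℝ}
    (hw : ∀ x ∈ Icc a b, HasDerivWithinAt w (w' x) (Icc a b) x)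
    (hw' : IntervalIntegrable w' volume a b) (hwa : w a = 0) {x : ℝ} (hx : x ∈ Icc a b) :
    |w x| ≤ ∫ t in a..b, |w' t| := by
  have hsub : Icc a x ⊆ Icc a b := Icc_subset_Icc_right hx.2
  have hFTC : ∫ t in a..x, w' t = w x := by
    rw [intervalIntegral.integral_eq_sub_of_hasDerivAt_of_le hx.1
      (fun t ht => (hw t (hsub ht)).continuousWithinAt.mono hsub)
      (fun t ht => (hw t (hsub (Ioo_subset_Icc_self ht))).hasDerivAt
        (Icc_mem_nhds ht.1 (ht.2.trans_le hx.2)))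
      (hw'.mono_set (by rwa [uIcc_of_le hx.1, uIcc_of_le (hx.1.trans hx.2)])), hwa, sub_zero]
  calc |w x| = |∫ t in a..x, w' t| := by rw [hFTC]
    _ ≤ ∫ t in a..x, |w' t| := intervalIntegral.abs_integral_le_integral_abs hx.1
    _ ≤ ∫ t in a..b, |w' t| :=
      intervalIntegral.integral_mono_interval le_rfl hx.1 hx.2
        (ae_of_all _ fun t => abs_nonneg _) hw'.abs

theorem integral_sq_le_mul_sq_integral_abs_deriv_of_eq_zero {a b : ℝ} (hab : a ≤ b)
    {w w' : ℝ → ℝ} (hw : ∀ x ∈ Icc a b, HasDerivWithinAt w (w' x) (Icc a b) x)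
    (hw' : IntervalIntegrable w' volume a b) (hwa : w a = 0) :
    ∫ x in a..b, w x ^ 2 ≤ (b - a) * (∫ t in a..b, |w' t|) ^ 2 := by
  have hwc : ContinuousOn w (Icc a b) := fun x hx => (hw x hx).continuousWithinAt
  calc ∫ x in a..b, w x ^ 2 ≤ ∫ _ in a..b, (∫ t in a..b, |w' t|) ^ 2 := by
        refine intervalIntegral.integral_mono_on hab ((hwc.pow 2).intervalIntegrable_of_Icc hab)
          intervalIntegrable_const fun x hx => ?_
        rw [← sq_abs]
        exact pow_le_pow_left₀ (abs_nonneg _) (abs_le_integral_abs_deriv_of_eq_zero hw hw' hwa hx) 2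
    _ = (b - a) * (∫ t in a..b, |w' t|) ^ 2 := by simp

theorem one_div_mul_integral_sq_mul_inv_le_integral_mul_deriv_sq {a b : ℝ} (hab : a < b)
    {w w' g : ℝ → ℝ} (hw : ∀ x ∈ Icc a b, HasDerivWithinAt w (w' x) (Icc a b) x)
    (hw' : ContinuousOn w' (Icc a b)) (hwa : w a = 0) (hg : ContinuousOn g (Icc a b))
    (hg₀ : ∀ x ∈ Icc a b, 0 < g x) :
    1 / (b - a) * (∫ x in a..b, w x ^ 2) * (∫ x in a..b, (g x)⁻¹)⁻¹
      ≤ ∫ x in a..b, g x * w' x ^ 2 := by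
  have hint {f : ℝ → ℝ} (hf : ContinuousOn f (Icc a b)) :
      Integrable f (volume.restrict (Ioc a b)) :=
    hf.integrableOn_Icc.mono_set Ioc_subset_Icc_self
  have hginv : ContinuousOn (fun x => (g x)⁻¹) (Icc a b) := hg.inv₀ fun x hx => (hg₀ x hx).ne'
  have hI : 0 < ∫ x in a..b, (g x)⁻¹ :=
    intervalIntegral.intervalIntegral_pos_of_pos_on (hginv.intervalIntegrable_of_Icc hab.le)
      (fun x hx => inv_pos.2 (hg₀ x (Ioo_subset_Icc_self hx))) hab
  have hpoincare := integral_sq_le_mul_sq_integral_abs_deriv_of_eq_zero hab.le hw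
    (hw'.intervalIntegrable_of_Icc hab.le) hwa
  have hcauchy : (∫ x in a..b, |w' x|) ^ 2
      ≤ (∫ x in a..b, g x * w' x ^ 2) * ∫ x in a..b, (g x)⁻¹ := by
    simp only [intervalIntegral.integral_of_le hab.le]
    exact sq_integral_abs_le_integral_mul_sq_mul_integral_inv
      ((ae_restrict_iff' measurableSet_Ioc).2
        (ae_of_all _ fun x hx => hg₀ x (Ioc_subset_Icc_self hx)))
      (hint hw') (hint (hg.mul (hw'.pow 2))) (hint hginv)
  rw [← div_eq_mul_inv, div_le_iff₀ hI, one_div_mul_eq_div, div_le_iff₀ (sub_pos.2 hab)]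
  nlinarith [mul_le_mul_of_nonneg_left hcauchy (sub_pos.2 hab).le]

theorem continuous_intervalIntegral_of_continuousOn_univ_prod_Icc {X E : Type*}
    [TopologicalSpace X] [NormedAddCommGroup E] [NormedSpace ℝ E] {F : X → ℝ → E} {a b : ℝ}
    (hab : a ≤ b) (hF : ContinuousOn (uncurry F) (univ ×ˢ Icc a b)) :
    Continuous fun p => ∫ x in a..b, F p x := by
  have hext : Continuous (uncurry fun p x => F p (projIcc a b hab x)) :=
    hF.comp_continuous
      (by fun_prop : Continuous fun q : X × ℝ => (q.1, (projIcc a b hab q.2 : ℝ)))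
      fun q => ⟨mem_univ _, (projIcc a b hab q.2).2⟩
  refine (intervalIntegral.continuous_parametric_intervalIntegral_of_continuous' hext a b).congr
    fun p => intervalIntegral.integral_congr fun x hx => ?_
  rw [uIcc_of_le hab] at hx
  simp [projIcc_of_mem hab hx]

theorem intervalIntegral_swap_of_continuousOn {E : Type*} [NormedAddCommGroup E]
    [NormedSpace ℝ E] {F : ℝ → ℝ → E} {a b c d : ℝ} (hab : a ≤ b) (hcd : c ≤ d)
    (hF : ContinuousOn (uncurry F) (Icc a b ×ˢ Icc c d)) :
    ∫ x in a..b, ∫ y in c..d, F x y = ∫ y in c..d, ∫ x in a..b, F x y := by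
  refine intervalIntegral_intervalIntegral_swap ?_
  rw [uIoc_of_le hab, uIoc_of_le hcd]
  exact (hF.integrableOn_compact (isCompact_Icc.prod isCompact_Icc)).mono_set
    (prod_mono Ioc_subset_Icc_self Ioc_subset_Icc_self)

theorem sub_mul_sub_eq_integral_deriv_mul_sq {ψ : ℝ → ℝ} (hψ : ContDiff ℝ 1 ψ) (a b : ℝ) :
    (ψ a - ψ b) * (a - b) = ∫ l in (0:ℝ)..1, deriv ψ (a + l * (b - a)) * (a - b) ^ 2 := by
  have hψc : Continuous (deriv ψ) := hψ.continuous_deriv le_rfl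
  have hsegment := intervalIntegral.integral_unitInterval_deriv_eq_sub
    (f := ψ) (z₀ := a) (z₁ := b - a)
    (hψc.comp (by fun_prop)).continuousOn
    fun t _ => (hψ.differentiable one_ne_zero _).hasDerivAt
  simp only [smul_eq_mul, add_sub_cancel] at hsegment
  rw [intervalIntegral.integral_mul_const]
  linear_combination (a - b) * hsegment

theorem stmt6_general (L : ℝ) (hL : 0 < L) (ψ : ℝ → ℝ) (hψ : ContDiff ℝ 1 ψ)
    (hψ' : ∀ r : ℝ, 0 < deriv ψ r)
    (u v u' v' : ℝ → ℝ)
    (hu : ∀ x ∈ Set.Icc (0:ℝ) L, HasDerivWithinAt u (u' x) (Set.Icc 0 L) x)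
    (hv : ∀ x ∈ Set.Icc (0:ℝ) L, HasDerivWithinAt v (v' x) (Set.Icc 0 L) x)
    (hu' : ContinuousOn u' (Set.Icc 0 L)) (hv' : ContinuousOn v' (Set.Icc 0 L))
    (hu0 : u 0 = 0) (hv0 : v 0 = 0) :
    (∫ x in (0:ℝ)..L, (ψ (u' x) - ψ (v' x)) * (u' x - v' x))
      ≥ (1 / L) * (∫ x in (0:ℝ)..L, (u x - v x) ^ 2) *
        ∫ l in (0:ℝ)..1, (∫ x in (0:ℝ)..L, (deriv ψ (u' x + l * (v' x - u' x)))⁻¹)⁻¹ := by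
  set G : ℝ → ℝ → ℝ := fun l x => deriv ψ (u' x + l * (v' x - u' x))
  have hcomp_snd {f : ℝ → ℝ} (hf : ContinuousOn f (Icc 0 L)) :
      ContinuousOn (fun p : ℝ × ℝ => f p.2) (univ ×ˢ Icc 0 L) :=
    hf.comp continuousOn_snd fun _ hp => hp.2
  have hG : ContinuousOn (uncurry G) (univ ×ˢ Icc 0 L) :=
    (hψ.continuous_deriv le_rfl).comp_continuousOn
      ((hcomp_snd hu').add (continuousOn_fst.mul ((hcomp_snd hv').sub (hcomp_snd hu'))))
  have hGinv : ContinuousOn (uncurry fun l x => (G l x)⁻¹) (univ ×ˢ Icc 0 L) :=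
    hG.inv₀ fun _ _ => (hψ' _).ne'
  have hH : ContinuousOn (uncurry fun l x => G l x * (u' x - v' x) ^ 2) (univ ×ˢ Icc 0 L) :=
    hG.mul ((hcomp_snd (hu'.sub hv')).pow 2)
  have hI : ∀ l, 0 < ∫ x in (0:ℝ)..L, (G l x)⁻¹ := fun l =>
    intervalIntegral.intervalIntegral_pos_of_pos_on
      ((hGinv.uncurry_left l (mem_univ l)).intervalIntegrable_of_Icc hL.le)
      (fun _ _ => inv_pos.2 (hψ' _)) hL
  have hLHS : ∫ x in (0:ℝ)..L, (ψ (u' x) - ψ (v' x)) * (u' x - v' x)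
      = ∫ l in (0:ℝ)..1, ∫ x in (0:ℝ)..L, G l x * (u' x - v' x) ^ 2 := by
    rw [intervalIntegral_swap_of_continuousOn zero_le_one hL.le
      (hH.mono (prod_mono (subset_univ _) subset_rfl))]
    exact intervalIntegral.integral_congr fun x _ =>
      sub_mul_sub_eq_integral_deriv_mul_sq hψ _ _
  rw [ge_iff_le, hLHS, ← intervalIntegral.integral_const_mul]
  refine intervalIntegral.integral_mono_on zero_le_one ?_ ?_ fun l _ => ?_
  · exact (continuous_const.mul ((continuous_intervalIntegral_of_continuousOn_univ_prod_Icc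
      hL.le hGinv).inv₀ fun l => (hI l).ne')).intervalIntegrable 0 1
  · exact (continuous_intervalIntegral_of_continuousOn_univ_prod_Icc hL.le hH).intervalIntegrable
      0 1
  · have hbound := one_div_mul_integral_sq_mul_inv_le_integral_mul_deriv_sq hL
      (w := fun x => u x - v x) (fun x hx => (hu x hx).sub (hv x hx)) (hu'.sub hv')
      (by simp [hu0, hv0]) (hG.uncurry_left l (mem_univ l)) fun _ _ => hψ' _
    rwa [sub_zero] at hbound

/-- One-dimensional stability estimate for the singular Φ-Laplace operator:
`⟨A(u) − A(v), u − v⟩ ≥ (1/L)·‖u − v‖²_{L²}·∫₀¹ (∫₀^L (ψ'(γ(λ)))⁻¹)⁻¹ dλ`. -/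
theorem stmt6 (L : ℝ) (hL : 0 < L) (ψ : ℝ → ℝ) (hψ : ContDiff ℝ 1 ψ)
    (hψ' : ∀ r : ℝ, 0 < deriv ψ r)
    (u v u' v' : ℝ → ℝ)
    (hu : ∀ x ∈ Set.Icc (0:ℝ) L, HasDerivWithinAt u (u' x) (Set.Icc 0 L) x)
    (hv : ∀ x ∈ Set.Icc (0:ℝ) L, HasDerivWithinAt v (v' x) (Set.Icc 0 L) x)
    (hu' : ContinuousOn u' (Set.Icc 0 L)) (hv' : ContinuousOn v' (Set.Icc 0 L))
    (hu0 : u 0 = 0) (hv0 : v 0 = 0) (huL : u L = 0) (hvL : v L = 0) :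
    (∫ x in (0:ℝ)..L, (ψ (u' x) - ψ (v' x)) * (u' x - v' x))
      ≥ (1 / L) * (∫ x in (0:ℝ)..L, (u x - v x) ^ 2) *
        ∫ l in (0:ℝ)..1, (∫ x in (0:ℝ)..L, (deriv ψ (u' x + l * (v' x - u' x)))⁻¹)⁻¹ :=
  stmt6_general L hL ψ hψ hψ' u v u' v' hu hv hu' hv' hu0 hv0
end

section
/- Let L > 0, a ≥ 0, b > 0 and s ∈ (0,2]. Let ψ : ℝ → ℝ be continuously differentiable with ψ'(r) > 0 and (a + b|r|^s)·ψ'(r) ≥ 1 for every r ∈ ℝ. Set s* := max(2 − s, (4 − s)/(2 + s)). Then there exist constants C₁ = C(L, b, s) > 0 and C₂ = C(L, a, s) > 0 such that for every u ∈ C_c^∞((0,L)), ( ∫₀^L |u''(x)| dx )^{s*} ≤ s* · ∫₀^L ψ'(u'(x))·|u''(x)|² dx + C₁·( ∫₀^L |u'(x)| dx )^{max(1, 2−s)} + C₂. -/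
open MeasureTheory Set intervalIntegral

private lemma cs_aux {I J M : ℝ} (hI : 0 ≤ I) (hJ : 0 ≤ J) (hM : 0 ≤ M)
    (h : ∀ t : ℝ, 0 < t → I ≤ t / 2 * J + 1 / (2 * t) * M) : I * I ≤ J * M := by
  by_contra hc
  push_neg at hc
  have hIpos : 0 < I := by nlinarith
  rcases eq_or_lt_of_le hJ with hJ0 | hJ0
  · rcases eq_or_lt_of_le hM with hM0 | hM0
    · have := h 1 one_pos; nlinarith
    · have h1 := h (M / I) (by positivity)
      have e : 1 / (2 * (M / I)) * M = I / 2 := by field_simp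
      rw [e, ← hJ0] at h1
      nlinarith
  · rcases eq_or_lt_of_le hM with hM0 | hM0
    · have h1 := h (I / J) (by positivity)
      have e : I / J / 2 * J = I / 2 := by field_simp
      rw [e, ← hM0] at h1
      nlinarith
    · set σ := Real.sqrt (J * M) with hσdef
      have hσsq : σ * σ = J * M := Real.mul_self_sqrt (by positivity)
      have hσpos : 0 < σ := Real.sqrt_pos.mpr (by positivity)
      have h1 := h (σ / J) (by positivity)
      have e1 : σ / J / 2 * J = σ / 2 := by field_simp
      have e2 : 1 / (2 * (σ / J)) * M = σ / 2 := by
        field_simp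
        nlinarith
      rw [e1, e2] at h1
      nlinarith

open MeasureTheory Set intervalIntegral

private lemma core_facts (L a b s : ℝ) (hL : 0 < L) (ha : 0 ≤ a) (hb : 0 < b)
    (hs0 : 0 < s)
    (ψ : ℝ → ℝ) (hψ : ContDiff ℝ 1 ψ)
    (hψ' : ∀ r : ℝ, 0 < deriv ψ r)
    (hC4 : ∀ r : ℝ, (a + b * |r| ^ s) * deriv ψ r ≥ 1)
    (u : ℝ → ℝ) (hu : ContDiff ℝ (⊤ : ℕ∞) u)
    (hsupp : tsupport u ⊆ Set.Ioo 0 L) :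
    0 ≤ (∫ x in (0:ℝ)..L, |deriv (deriv u) x|) ∧
    0 ≤ (∫ x in (0:ℝ)..L, deriv ψ (deriv u x) * |deriv (deriv u) x| ^ 2) ∧
    0 ≤ (∫ x in (0:ℝ)..L, |deriv u x|) ∧
    0 ≤ (∫ x in (0:ℝ)..L, |deriv u x| ^ s) ∧
    (∫ x in (0:ℝ)..L, |deriv (deriv u) x|) * (∫ x in (0:ℝ)..L, |deriv (deriv u) x|)
      ≤ (∫ x in (0:ℝ)..L, deriv ψ (deriv u x) * |deriv (deriv u) x| ^ 2) *
        (a * L + b * (∫ x in (0:ℝ)..L, |deriv u x| ^ s)) ∧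
    (s ≤ 1 → (∫ x in (0:ℝ)..L, |deriv u x| ^ s)
      ≤ s * ((∫ x in (0:ℝ)..L, |deriv u x|) + 1) ^ (s - 1) * (∫ x in (0:ℝ)..L, |deriv u x|)
        + (1 - s) * ((∫ x in (0:ℝ)..L, |deriv u x|) + 1) ^ s * L) ∧
    (1 ≤ s → (∫ x in (0:ℝ)..L, |deriv u x| ^ s)
      ≤ (∫ x in (0:ℝ)..L, |deriv (deriv u) x|) ^ (s - 1) * (∫ x in (0:ℝ)..L, |deriv u x|)) := by
  have hu1 : ContDiff ℝ (⊤:ℕ∞) u := hu.of_le (by simp)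
  have hu' : ContDiff ℝ (⊤:ℕ∞) (deriv u) := (contDiff_infty_iff_deriv.mp hu1).2
  have hu'' : ContDiff ℝ (⊤:ℕ∞) (deriv (deriv u)) := (contDiff_infty_iff_deriv.mp hu').2
  have hf_diff : Differentiable ℝ (deriv u) := hu'.differentiable (by simp)
  have hfc : Continuous (deriv u) := hu'.continuous
  have hgc : Continuous (deriv (deriv u)) := hu''.continuous
  have hψc : Continuous (deriv ψ) := hψ.continuous_deriv le_rfl
  set f := deriv u with hf
  set g := deriv (deriv u) with hg
  -- continuity of integrands
  have c1 : Continuous fun x => |g x| := hgc.abs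
  have c2 : Continuous fun x => deriv ψ (f x) * |g x| ^ 2 :=
    (hψc.comp hfc).mul ((hgc.abs).pow 2)
  have c3 : Continuous fun x => |f x| ^ s :=
    (hfc.abs).rpow_const fun x => Or.inr hs0.le
  have c4 : Continuous fun x => |f x| := hfc.abs
  set I := ∫ x in (0:ℝ)..L, |g x| with hI
  set J := ∫ x in (0:ℝ)..L, deriv ψ (f x) * |g x| ^ 2 with hJ
  set K := ∫ x in (0:ℝ)..L, |f x| with hK
  set T := ∫ x in (0:ℝ)..L, |f x| ^ s with hT
  have hI0 : 0 ≤ I := intervalIntegral.integral_nonneg hL.le fun x _ => abs_nonneg _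
  have hJ0 : 0 ≤ J := intervalIntegral.integral_nonneg hL.le fun x _ => by
    have := (hψ' (f x)).le; positivity
  have hK0 : 0 ≤ K := intervalIntegral.integral_nonneg hL.le fun x _ => abs_nonneg _
  have hT0 : 0 ≤ T := intervalIntegral.integral_nonneg hL.le fun x _ => by positivity
  refine ⟨hI0, hJ0, hK0, hT0, ?_, ?_, ?_⟩
  · -- Cauchy–Schwarz-type inequality via ε-family
    have hM0 : 0 ≤ a * L + b * T := by nlinarith
    refine cs_aux hI0 hJ0 hM0 fun t ht => ?_
    have hmono : I ≤ ∫ x in (0:ℝ)..L,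
        (t / 2 * (deriv ψ (f x) * |g x| ^ 2) + 1 / (2 * t) * (a + b * |f x| ^ s)) := by
      have cc2 : Continuous fun x => t / 2 * (deriv ψ (f x) * |g x| ^ 2) :=
        continuous_const.mul c2
      have cc3 : Continuous fun x => a + b * |f x| ^ s :=
        continuous_const.add (continuous_const.mul c3)
      refine intervalIntegral.integral_mono_on hL.le (c1.intervalIntegrable _ _)
        ((cc2.add (continuous_const.mul cc3)).intervalIntegrable _ _)
        fun x _ => ?_
      have hA := hψ' (f x)
      have h4 := hC4 (f x)
      have habs : 0 ≤ |g x| := abs_nonneg _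
      have e2 : t / 2 * (deriv ψ (f x) * |g x| ^ 2) + 1 / (2 * t) * (a + b * |f x| ^ s) - |g x|
          = 1 / (2 * t * deriv ψ (f x)) *
            ((t * (deriv ψ (f x) * |g x|) - 1) ^ 2
              + ((a + b * |f x| ^ s) * deriv ψ (f x) - 1)) := by
        field_simp
        ring
      have hnn : 0 ≤ 1 / (2 * t * deriv ψ (f x)) *
            ((t * (deriv ψ (f x) * |g x|) - 1) ^ 2
              + ((a + b * |f x| ^ s) * deriv ψ (f x) - 1)) := by
        have h5 : 0 ≤ (t * (deriv ψ (f x) * |g x|) - 1) ^ 2 := sq_nonneg _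
        have h6 : 0 ≤ (a + b * |f x| ^ s) * deriv ψ (f x) - 1 := by linarith
        positivity
      linarith [e2 ▸ hnn]
    calc I ≤ _ := hmono
      _ = t / 2 * J + 1 / (2 * t) * (a * L + b * T) := by
          have cc2 : Continuous fun x => t / 2 * (deriv ψ (f x) * |g x| ^ 2) :=
            continuous_const.mul c2
          have cc3 : Continuous fun x => a + b * |f x| ^ s :=
            continuous_const.add (continuous_const.mul c3)
          rw [intervalIntegral.integral_add (f := fun x => t / 2 * (deriv ψ (f x) * |g x| ^ 2))
            (g := fun x => 1 / (2 * t) * (a + b * |f x| ^ s)) (cc2.intervalIntegrable _ _)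
            ((continuous_const.mul cc3 : Continuous fun x => 1 / (2 * t) * (a + b * |f x| ^ s)).intervalIntegrable _ _)]
          have e3 : (∫ x in (0:ℝ)..L, t / 2 * (deriv ψ (f x) * |g x| ^ 2)) = t / 2 * J := by
            rw [hJ, ← intervalIntegral.integral_const_mul]
          have hMeq : (∫ x in (0:ℝ)..L, (a + b * |f x| ^ s)) = a * L + b * T := by
            rw [intervalIntegral.integral_add (g := fun x => b * |f x| ^ s) intervalIntegrable_const
              ((continuous_const.mul c3 : Continuous fun x => b * |f x| ^ s).intervalIntegrable _ _),
              intervalIntegral.integral_const, intervalIntegral.integral_const_mul, ← hT]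
            simp [smul_eq_mul]
            ring
          have e4 : (∫ x in (0:ℝ)..L, 1 / (2 * t) * (a + b * |f x| ^ s))
              = 1 / (2 * t) * (a * L + b * T) := by
            rw [intervalIntegral.integral_const_mul, hMeq]
          rw [e3, e4]
  · -- s ≤ 1 bound on T
    intro hs1
    have hK1 : (0:ℝ) < K + 1 := by linarith
    have hmono : T ≤ ∫ x in (0:ℝ)..L,
        (s * ((K + 1) ^ (s - 1) * |f x|) + (1 - s) * (K + 1) ^ s) := by
      refine intervalIntegral.integral_mono_on hL.le (c3.intervalIntegrable _ _)
        (((continuous_const.mul (continuous_const.mul c4)).add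
          continuous_const).intervalIntegrable _ _) fun x _ => ?_
      have hfx : 0 ≤ |f x| := abs_nonneg _
      have hgm := Real.geom_mean_le_arith_mean2_weighted hs0.le
        (by linarith : (0:ℝ) ≤ 1 - s)
        (by positivity : (0:ℝ) ≤ (K + 1) ^ (s - 1) * |f x|)
        (by positivity : (0:ℝ) ≤ (K + 1) ^ s) (by ring)
      have e : ((K + 1) ^ (s - 1) * |f x|) ^ s * ((K + 1) ^ s) ^ (1 - s) = |f x| ^ s := by
        rw [Real.mul_rpow (by positivity) hfx, ← Real.rpow_mul hK1.le,
          ← Real.rpow_mul hK1.le, mul_right_comm, ← Real.rpow_add hK1]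
        have : (s - 1) * s + s * (1 - s) = 0 := by ring
        rw [this, Real.rpow_zero, one_mul]
      rw [e] at hgm
      exact hgm
    calc T ≤ _ := hmono
      _ = s * (K + 1) ^ (s - 1) * K + (1 - s) * (K + 1) ^ s * L := by
          rw [intervalIntegral.integral_add (f := fun x => s * ((K + 1) ^ (s - 1) * |f x|))
            (g := fun _ => (1 - s) * (K + 1) ^ s)
            ((continuous_const.mul (continuous_const.mul c4) : Continuous fun x => s * ((K + 1) ^ (s - 1) * |f x|)).intervalIntegrable _ _)
            (intervalIntegrable_const),
            intervalIntegral.integral_const, hK]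
          have e5 : (∫ x in (0:ℝ)..L, s * ((K + 1) ^ (s - 1) * |f x|))
              = s * (K + 1) ^ (s - 1) * (∫ x in (0:ℝ)..L, |f x|) := by
            rw [← intervalIntegral.integral_const_mul]
            congr 1; ext x; ring
          rw [e5]
          simp [smul_eq_mul]
          ring
  · -- s ≥ 1 bound on T
    intro hs1
    -- sup bound : |f x| ≤ I on [0, L]
    have hsup : ∀ x ∈ Icc (0:ℝ) L, |f x| ≤ I := by
      intro x hx
      have h0mem : (0:ℝ) ∉ tsupport u := fun h => absurd (hsupp h).1 (lt_irrefl 0)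
      have hu0 : u =ᶠ[nhds (0:ℝ)] fun _ => (0:ℝ) := by
        filter_upwards [(isClosed_tsupport u).isOpen_compl.mem_nhds h0mem] with y hy
          using image_eq_zero_of_notMem_tsupport hy
      have hf0 : f 0 = 0 := by
        rw [hf, hu0.deriv_eq, deriv_const]
      have hftc : ∫ y in (0:ℝ)..x, g y = f x - f 0 :=
        intervalIntegral.integral_deriv_eq_sub (fun y _ => hf_diff y)
          (hgc.intervalIntegrable _ _)
      have : |f x| = |∫ y in (0:ℝ)..x, g y| := by rw [hftc, hf0, sub_zero]
      rw [this]
      calc |∫ y in (0:ℝ)..x, g y| ≤ ∫ y in (0:ℝ)..x, |g y| :=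
            intervalIntegral.abs_integral_le_integral_abs hx.1
        _ ≤ I := intervalIntegral.integral_mono_interval le_rfl hx.1 hx.2
            (MeasureTheory.ae_of_all _ fun y => abs_nonneg _) (c1.intervalIntegrable _ _)
    have hmono : T ≤ ∫ x in (0:ℝ)..L, I ^ (s - 1) * |f x| := by
      refine intervalIntegral.integral_mono_on hL.le (c3.intervalIntegrable _ _)
        ((continuous_const.mul c4).intervalIntegrable _ _) fun x hx => ?_
      rcases eq_or_ne (f x) 0 with h0 | h0
      · rw [h0, abs_zero, Real.zero_rpow hs0.ne']
        positivity
      · have hfx : 0 < |f x| := abs_pos.mpr h0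
        have e : |f x| ^ s = |f x| ^ (s - 1) * |f x| := by
          nth_rewrite 3 [← Real.rpow_one |f x|]
          rw [← Real.rpow_add hfx]
          norm_num
        rw [e]
        exact mul_le_mul_of_nonneg_right
          (Real.rpow_le_rpow hfx.le (hsup x hx) (by linarith)) hfx.le
    calc T ≤ _ := hmono
      _ = I ^ (s - 1) * K := by rw [intervalIntegral.integral_const_mul, hK]

set_option maxHeartbeats 1000000 in
/-- One-dimensional second-order a priori estimate (Lemma `a-priori`):
for `u ∈ C_c^∞((0,L))`,
`(∫|u''|)^{s*} ≤ s*·∫ ψ'(u')|u''|² + C₁·(∫|u'|)^{max(1,2−s)} + C₂`,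
where `s* = max(2−s, (4−s)/(2+s))`. -/
theorem stmt8 (L a b s : ℝ) (hL : 0 < L) (ha : 0 ≤ a) (hb : 0 < b)
    (hs : s ∈ Set.Ioc (0:ℝ) 2)
    (ψ : ℝ → ℝ) (hψ : ContDiff ℝ 1 ψ)
    (hψ' : ∀ r : ℝ, 0 < deriv ψ r)
    (hC4 : ∀ r : ℝ, (a + b * |r| ^ s) * deriv ψ r ≥ 1) :
    ∃ C₁ : ℝ, 0 < C₁ ∧ ∃ C₂ : ℝ, 0 < C₂ ∧
      ∀ u : ℝ → ℝ, ContDiff ℝ (⊤ : ℕ∞) u → HasCompactSupport u →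
        tsupport u ⊆ Set.Ioo 0 L →
        (∫ x in (0:ℝ)..L, |deriv (deriv u) x|) ^ (max (2 - s) ((4 - s) / (2 + s)))
          ≤ max (2 - s) ((4 - s) / (2 + s)) *
              (∫ x in (0:ℝ)..L, deriv ψ (deriv u x) * |deriv (deriv u) x| ^ 2)
            + C₁ * (∫ x in (0:ℝ)..L, |deriv u x|) ^ (max 1 (2 - s)) + C₂ := by
  obtain ⟨hs0, hs2⟩ := hs
  rcases le_or_gt s 1 with hs1 | hs1
  · -- case s ≤ 1
    have hps : max (2 - s) ((4 - s) / (2 + s)) = 2 - s := by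
      apply max_eq_left
      rw [div_le_iff₀ (by linarith : (0:ℝ) < 2 + s)]
      nlinarith
    have hm : max (1:ℝ) (2 - s) = 2 - s := max_eq_right (by linarith)
    set c : ℝ := a * L + b * (s + (1 - s) * L) with hcdef
    have hc : 0 < c := by
      nlinarith [mul_nonneg ha hL.le, mul_nonneg (by linarith : (0:ℝ) ≤ 1 - s) hL.le]
    refine ⟨s / 2 * (c / 2) ^ ((2 - s) / s) * 4 + 1, by positivity,
      s / 2 * (c / 2) ^ ((2 - s) / s) * 4 + 1, by positivity, ?_⟩
    intro u hu hcs hsupp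
    obtain ⟨hI0, hJ0, hK0, hT0, hCS, hTle, -⟩ :=
      core_facts L a b s hL ha hb hs0 ψ hψ hψ' hC4 u hu hsupp
    set I := ∫ x in (0:ℝ)..L, |deriv (deriv u) x| with hIdef
    set J := ∫ x in (0:ℝ)..L, deriv ψ (deriv u x) * |deriv (deriv u) x| ^ 2 with hJdef
    set K := ∫ x in (0:ℝ)..L, |deriv u x| with hKdef
    set T := ∫ x in (0:ℝ)..L, |deriv u x| ^ s with hTdef
    have hTle' := hTle hs1
    have hK1 : (0:ℝ) < K + 1 := by linarith
    have hX1 : (1:ℝ) ≤ (K + 1) ^ s := Real.one_le_rpow (by linarith) hs0.le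
    have hrw : (K + 1) ^ (s - 1) * (K + 1) = (K + 1) ^ s := by
      nth_rewrite 2 [← Real.rpow_one (K + 1)]
      rw [← Real.rpow_add hK1]
      norm_num
    have h1 : (K + 1) ^ (s - 1) * K ≤ (K + 1) ^ s := by
      calc (K + 1) ^ (s - 1) * K ≤ (K + 1) ^ (s - 1) * (K + 1) :=
            mul_le_mul_of_nonneg_left (by linarith) (by positivity)
        _ = (K + 1) ^ s := hrw
    have hTle2 : a * L + b * T ≤ c * (K + 1) ^ s := by
      rw [hcdef]
      linarith [mul_le_mul_of_nonneg_left hTle' hb.le,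
        mul_le_mul_of_nonneg_left h1 (by positivity : (0:ℝ) ≤ b * s),
        le_mul_of_one_le_right (mul_nonneg ha hL.le) hX1,
        mul_nonneg (mul_nonneg hb.le (by linarith : (0:ℝ) ≤ 1 - s)) hL.le]
    have hCS2 : I * I ≤ J * (c * (K + 1) ^ s) :=
      hCS.trans (mul_le_mul_of_nonneg_left hTle2 hJ0)
    have h2s2 : (0:ℝ) ≤ (2 - s) / 2 := by linarith
    have hII : I * I = I ^ (2:ℝ) := by
      rw [show (2:ℝ) = ((2:ℕ):ℝ) by norm_num, Real.rpow_natCast]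
      ring
    have hstep1 : I ^ (2 - s) ≤ (J * (c * (K + 1) ^ s)) ^ ((2 - s) / 2) := by
      have e : I ^ (2 - s) = (I * I) ^ ((2 - s) / 2) := by
        calc I ^ (2 - s) = I ^ ((2:ℝ) * ((2 - s) / 2)) := by congr 1; ring
          _ = (I ^ (2:ℝ)) ^ ((2 - s) / 2) := Real.rpow_mul hI0 2 ((2 - s) / 2)
          _ = (I * I) ^ ((2 - s) / 2) := by rw [hII]
      rw [e]
      exact Real.rpow_le_rpow (mul_self_nonneg I) hCS2 h2s2
    have hsplit : (J * (c * (K + 1) ^ s)) ^ ((2 - s) / 2)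
        = (2 * J) ^ ((2 - s) / 2) * ((c / 2 * (K + 1) ^ s) ^ ((2 - s) / s)) ^ (s / 2) := by
      rw [← Real.rpow_mul (by positivity : (0:ℝ) ≤ c / 2 * (K + 1) ^ s),
        show (2 - s) / s * (s / 2) = (2 - s) / 2 by field_simp,
        ← Real.mul_rpow (by positivity) (by positivity)]
      congr 1
      ring
    have hgm := Real.geom_mean_le_arith_mean2_weighted h2s2 (by positivity : (0:ℝ) ≤ s / 2)
      (by positivity : (0:ℝ) ≤ 2 * J)
      (by positivity : (0:ℝ) ≤ (c / 2 * (K + 1) ^ s) ^ ((2 - s) / s)) (by ring)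
    have he3 : (c / 2 * (K + 1) ^ s) ^ ((2 - s) / s)
        = (c / 2) ^ ((2 - s) / s) * (K + 1) ^ (2 - s) := by
      rw [Real.mul_rpow (by positivity) (by positivity), ← Real.rpow_mul hK1.le]
      congr 2
      field_simp
    have he4 : (K + 1) ^ (2 - s) ≤ 4 * (K ^ (2 - s) + 1) := by
      have h4eq : (2:ℝ) ^ (2 - s) ≤ 4 := by
        calc (2:ℝ) ^ (2 - s) ≤ (2:ℝ) ^ (2:ℝ) :=
              Real.rpow_le_rpow_of_exponent_le one_le_two (by linarith)
          _ = 4 := by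
              rw [show (2:ℝ) = ((2:ℕ):ℝ) by norm_num, Real.rpow_natCast]
              norm_num
      have h6 : (0:ℝ) ≤ K ^ (2 - s) := Real.rpow_nonneg hK0 _
      rcases le_total K 1 with h | h
      · have h5 : (K + 1) ^ (2 - s) ≤ (2:ℝ) ^ (2 - s) :=
          Real.rpow_le_rpow (by linarith) (by linarith) (by linarith)
        linarith
      · have h5 : (K + 1) ^ (2 - s) ≤ (2 * K) ^ (2 - s) :=
          Real.rpow_le_rpow (by linarith) (by linarith) (by linarith)
        rw [Real.mul_rpow (by norm_num) hK0] at h5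
        linarith [mul_le_mul_of_nonneg_right h4eq h6]
    rw [hps, hm]
    have final : I ^ (2 - s)
        ≤ (2 - s) * J + s / 2 * ((c / 2) ^ ((2 - s) / s) * (4 * (K ^ (2 - s) + 1))) := by
      calc I ^ (2 - s) ≤ _ := hstep1
        _ = (2 * J) ^ ((2 - s) / 2) * ((c / 2 * (K + 1) ^ s) ^ ((2 - s) / s)) ^ (s / 2) := hsplit
        _ ≤ (2 - s) / 2 * (2 * J) + s / 2 * ((c / 2 * (K + 1) ^ s) ^ ((2 - s) / s)) := hgm
        _ = (2 - s) * J + s / 2 * ((c / 2) ^ ((2 - s) / s) * (K + 1) ^ (2 - s)) := by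
            rw [he3]; ring
        _ ≤ _ := by
            have h9 : (c / 2) ^ ((2 - s) / s) * (K + 1) ^ (2 - s)
                ≤ (c / 2) ^ ((2 - s) / s) * (4 * (K ^ (2 - s) + 1)) :=
              mul_le_mul_of_nonneg_left he4 (by positivity)
            linarith [mul_le_mul_of_nonneg_left h9 (by linarith : (0:ℝ) ≤ s / 2)]
    have hpos : (0:ℝ) ≤ (c / 2) ^ ((2 - s) / s) := by positivity
    have hKp : (0:ℝ) ≤ K ^ (2 - s) := Real.rpow_nonneg hK0 _
    linarith [final, hKp]
  · -- case 1 < s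
    have h2s : (0:ℝ) < 2 + s := by linarith
    have h3s : (0:ℝ) < 3 - s := by linarith
    have hps : max (2 - s) ((4 - s) / (2 + s)) = (4 - s) / (2 + s) := by
      apply max_eq_right
      rw [le_div_iff₀ h2s]
      nlinarith
    have hm : max (1:ℝ) (2 - s) = 1 := max_eq_left (by linarith)
    set p : ℝ := (4 - s) / (2 + s) with hpdef
    have hp0 : 0 < p := div_pos (by linarith) h2s
    set θ : ℝ := p / (3 - s) with hθdef
    have hθ0 : 0 < θ := div_pos hp0 h3s
    have hθeq : θ * ((2 + s) * (3 - s)) = 4 - s := by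
      rw [hθdef, hpdef]; field_simp
    have hθhalf : 2 * θ ≤ 1 := by
      nlinarith [hθeq, mul_pos h2s h3s,
        mul_nonneg (by linarith : (0:ℝ) ≤ s - 1) (by linarith : (0:ℝ) ≤ 2 - s)]
    have hθ1 : θ < 1 := by linarith
    set r : ℝ := θ / (1 - θ) with hrdef
    have hr0 : 0 < r := div_pos hθ0 (by linarith)
    have hr1 : r ≤ 1 := by
      rw [hrdef, div_le_one (by linarith)]
      linarith
    have hpθ : p = (3 - s) * θ := by rw [hθdef]; field_simp
    have hrθ : r * (1 - θ) = θ := by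
      rw [hrdef, div_mul_cancel₀ _ (by linarith : (1:ℝ) - θ ≠ 0)]
    set c : ℝ := a * L + b with hcdef
    have hc : 0 < c := by nlinarith [mul_nonneg ha hL.le]
    set c' : ℝ := (1 - θ) * (c / (3 - s)) ^ r with hc'def
    have hc'0 : 0 < c' :=
      mul_pos (by linarith) (Real.rpow_pos_of_pos (by positivity) r)
    refine ⟨c' + 1, by linarith, c' + 2, by linarith, ?_⟩
    intro u hu hcs hsupp
    obtain ⟨hI0, hJ0, hK0, hT0, hCS, -, hTge⟩ :=
      core_facts L a b s hL ha hb hs0 ψ hψ hψ' hC4 u hu hsupp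
    set I := ∫ x in (0:ℝ)..L, |deriv (deriv u) x| with hIdef
    set J := ∫ x in (0:ℝ)..L, deriv ψ (deriv u x) * |deriv (deriv u) x| ^ 2 with hJdef
    set K := ∫ x in (0:ℝ)..L, |deriv u x| with hKdef
    set T := ∫ x in (0:ℝ)..L, |deriv u x| ^ s with hTdef
    have hTle := hTge hs1.le
    rw [hps, hm, Real.rpow_one]
    rcases le_or_gt I 1 with hI1 | hI1
    · have h1 : I ^ p ≤ 1 := Real.rpow_le_one hI0 hI1 hp0.le
      have h2 : 0 ≤ p * J := mul_nonneg hp0.le hJ0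
      have h3 : 0 ≤ (c' + 1) * K := mul_nonneg (by linarith) hK0
      linarith
    · have hIpos : 0 < I := by linarith
      have hIs1 : (1:ℝ) ≤ I ^ (s - 1) := Real.one_le_rpow hI1.le (by linarith)
      have hIs0 : 0 < I ^ (s - 1) := Real.rpow_pos_of_pos hIpos _
      have h7 : (1:ℝ) ≤ (K + 1) * I ^ (s - 1) := by nlinarith
      have h5 : a * L + b * T ≤ (c * (K + 1)) * I ^ (s - 1) := by
        rw [hcdef]
        have w1 := mul_le_mul_of_nonneg_left hTle hb.le
        have w2 := mul_le_mul_of_nonneg_left h7 (mul_nonneg ha hL.le)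
        have w3 := mul_nonneg hb.le hIs0.le
        linarith [w1, w2, w3]
      have hCS2 : I * I ≤ (J * (c * (K + 1))) * I ^ (s - 1) := by
        calc I * I ≤ J * (a * L + b * T) := hCS
          _ ≤ J * ((c * (K + 1)) * I ^ (s - 1)) := mul_le_mul_of_nonneg_left h5 hJ0
          _ = (J * (c * (K + 1))) * I ^ (s - 1) := by ring
      have key : I ^ ((3:ℝ) - s) ≤ J * (c * (K + 1)) := by
        have e : I ^ ((3:ℝ) - s) * I ^ (s - 1) = I * I := by
          rw [← Real.rpow_add hIpos, show (3:ℝ) - s + (s - 1) = 2 by ring,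
            show (2:ℝ) = ((2:ℕ):ℝ) by norm_num, Real.rpow_natCast]
          ring
        have h8 : I ^ ((3:ℝ) - s) * I ^ (s - 1) ≤ (J * (c * (K + 1))) * I ^ (s - 1) := by
          rw [e]; exact hCS2
        exact le_of_mul_le_mul_right h8 hIs0
      have hstep : I ^ p ≤ (J * (c * (K + 1))) ^ θ := by
        have e : I ^ p = (I ^ ((3:ℝ) - s)) ^ θ := by
          rw [hpθ, Real.rpow_mul hI0]
        rw [e]
        exact Real.rpow_le_rpow (Real.rpow_nonneg hI0 _) key hθ0.le
      have hsplit : (J * (c * (K + 1))) ^ θ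
          = ((3 - s) * J) ^ θ * ((c / (3 - s) * (K + 1)) ^ r) ^ (1 - θ) := by
        rw [← Real.rpow_mul (by positivity : (0:ℝ) ≤ c / (3 - s) * (K + 1)), hrθ,
          ← Real.mul_rpow (by positivity) (by positivity)]
        congr 1
        field_simp
      have hgm := Real.geom_mean_le_arith_mean2_weighted hθ0.le
        (by linarith : (0:ℝ) ≤ 1 - θ) (by positivity : (0:ℝ) ≤ (3 - s) * J)
        (by positivity : (0:ℝ) ≤ (c / (3 - s) * (K + 1)) ^ r) (by ring)
      have hZ : (c / (3 - s) * (K + 1)) ^ r ≤ (c / (3 - s)) ^ r * (K + 1) := by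
        rw [Real.mul_rpow (by positivity) (by linarith : (0:ℝ) ≤ K + 1)]
        have h10 : (K + 1) ^ r ≤ (K + 1) ^ (1:ℝ) :=
          Real.rpow_le_rpow_of_exponent_le (by linarith) hr1
        rw [Real.rpow_one] at h10
        exact mul_le_mul_of_nonneg_left h10 (by positivity)
      have e2 : θ * ((3 - s) * J) = p * J := by rw [hpθ]; ring
      have e3 : (1 - θ) * ((c / (3 - s)) ^ r * (K + 1)) = c' * K + c' := by
        rw [hc'def]; ring
      calc I ^ p ≤ _ := hstep
        _ = _ := hsplit
        _ ≤ θ * ((3 - s) * J) + (1 - θ) * ((c / (3 - s) * (K + 1)) ^ r) := hgm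
        _ ≤ θ * ((3 - s) * J) + (1 - θ) * ((c / (3 - s)) ^ r * (K + 1)) := by
            linarith [mul_le_mul_of_nonneg_left hZ (by linarith : (0:ℝ) ≤ 1 - θ)]
        _ ≤ p * J + (c' + 1) * K + (c' + 2) := by
            rw [e2] at *
            linarith [e3, hc'0, hK0]
end

section
/- Let s ∈ (0,2] and C > 0, and let g : [0,∞) → [0,∞) be differentiable with g'(t) ≤ −2C·g(t)^{(2−s)/2} for every t ≥ 0. Then g(t) ≤ ( max(g(0)^{s/2} − C·s·t, 0) )^{2/s} for every t ≥ 0; in particular, g(t) = 0 for all t ≥ g(0)^{s/2}/(C·s), and g(t) → 0 as t → ∞. -/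
/-! Where `g > 0`, the chain rule and the inequality give
`(g ^ (s/2))' = (s/2) g ^ (s/2 - 1) g' ≤ -C s`, so `g ^ (s/2)` decreases at least linearly with
slope `C s`. As `g` is antitone, `g t > 0` forces `g > 0` on all of `[0, t]`, so the linear bound
holds up to time `t`; it reaches zero at time `g 0 ^ (s/2) / (C s)`. -/

open Set

lemma antitoneOn_of_forall_hasDerivAt_nonpos {D : Set ℝ} (hD : Convex ℝ D) {f f' : ℝ → ℝ}
    (hf : ∀ x ∈ D, HasDerivAt f (f' x) x) (hf' : ∀ x ∈ D, f' x ≤ 0) : AntitoneOn f D :=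
  antitoneOn_of_hasDerivWithinAt_nonpos hD (fun x hx ↦ (hf x hx).continuousAt.continuousWithinAt)
    (fun x hx ↦ (hf x (interior_subset hx)).hasDerivWithinAt) fun x hx ↦ hf' x (interior_subset hx)

section ExtinctionODE

variable {s C : ℝ} {g g' : ℝ → ℝ}

lemma antitoneOn_Ici_of_deriv_le_neg_rpow (hC : 0 ≤ C)
    (hg : ∀ t, 0 ≤ t → HasDerivAt g (g' t) t) (hgnonneg : ∀ t, 0 ≤ t → 0 ≤ g t)
    (hineq : ∀ t, 0 ≤ t → g' t ≤ -2 * C * g t ^ ((2 - s) / 2)) : AntitoneOn g (Ici 0) :=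
  antitoneOn_of_forall_hasDerivAt_nonpos (convex_Ici 0) hg fun t ht ↦ by
    have := Real.rpow_nonneg (hgnonneg t ht) ((2 - s) / 2)
    nlinarith [hineq t ht]

lemma antitoneOn_rpow_add_mul_of_deriv_le_neg_rpow {D : Set ℝ} (hD : Convex ℝ D) (hs : 0 ≤ s)
    (hg : ∀ t ∈ D, HasDerivAt g (g' t) t) (hgpos : ∀ t ∈ D, 0 < g t)
    (hineq : ∀ t ∈ D, g' t ≤ -2 * C * g t ^ ((2 - s) / 2)) :
    AntitoneOn (fun t ↦ g t ^ (s / 2) + C * s * t) D := by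
  refine antitoneOn_of_forall_hasDerivAt_nonpos hD
    (fun t ht ↦ ((hg t ht).rpow_const (Or.inl (hgpos t ht).ne')).add
      ((hasDerivAt_id t).const_mul (C * s))) fun t ht ↦ ?_
  have hcancel : g t ^ ((2 - s) / 2) * g t ^ (s / 2 - 1) = 1 := by
    rw [← Real.rpow_add (hgpos t ht), show (2 - s) / 2 + (s / 2 - 1) = 0 by ring, Real.rpow_zero]
  have hchain : g' t * (s / 2) * g t ^ (s / 2 - 1) ≤
      -2 * C * g t ^ ((2 - s) / 2) * (s / 2) * g t ^ (s / 2 - 1) := by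
    have := (hgpos t ht).le
    gcongr
    exact hineq t ht
  have hslope : -2 * C * g t ^ ((2 - s) / 2) * (s / 2) * g t ^ (s / 2 - 1) = -(C * s) := by
    linear_combination (-(C * s)) * hcancel
  simp only [mul_one]
  linarith

lemma rpow_le_max_sub_mul_of_deriv_le_neg_rpow (hs : 0 < s) (hC : 0 ≤ C)
    (hg : ∀ t, 0 ≤ t → HasDerivAt g (g' t) t) (hgnonneg : ∀ t, 0 ≤ t → 0 ≤ g t)
    (hineq : ∀ t, 0 ≤ t → g' t ≤ -2 * C * g t ^ ((2 - s) / 2)) {t : ℝ} (ht : 0 ≤ t) :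
    g t ^ (s / 2) ≤ max (g 0 ^ (s / 2) - C * s * t) 0 := by
  rcases (hgnonneg t ht).eq_or_lt with hzero | hpos
  · rw [← hzero, Real.zero_rpow (by positivity)]
    exact le_max_right _ _
  have hgpos : ∀ u ∈ Icc 0 t, 0 < g u := fun u hu ↦
    hpos.trans_le (antitoneOn_Ici_of_deriv_le_neg_rpow hC hg hgnonneg hineq hu.1 ht hu.2)
  have hφ := antitoneOn_rpow_add_mul_of_deriv_le_neg_rpow (convex_Icc 0 t) hs.le
    (fun u hu ↦ hg u hu.1) hgpos (fun u hu ↦ hineq u hu.1)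
    (left_mem_Icc.mpr ht) (right_mem_Icc.mpr ht) ht
  simp only [mul_zero, add_zero] at hφ
  exact le_max_of_le_left (by linarith)

end ExtinctionODE

/-- ODE comparison lemma with finite-time extinction: if `g' ≤ −2C·g^{(2−s)/2}` then
`g(t) ≤ (max(g(0)^{s/2} − Cst, 0))^{2/s}`, `g` vanishes after time `g(0)^{s/2}/(Cs)`,
and `g(t) → 0` as `t → ∞`. -/
theorem stmt11 (s C : ℝ) (hs : s ∈ Set.Ioc (0:ℝ) 2) (hC : 0 < C)
    (g g' : ℝ → ℝ)
    (hg : ∀ t : ℝ, 0 ≤ t → HasDerivAt g (g' t) t)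
    (hgnonneg : ∀ t : ℝ, 0 ≤ t → 0 ≤ g t)
    (hineq : ∀ t : ℝ, 0 ≤ t → g' t ≤ -2 * C * g t ^ ((2 - s) / 2)) :
    (∀ t : ℝ, 0 ≤ t → g t ≤ (max (g 0 ^ (s / 2) - C * s * t) 0) ^ (2 / s)) ∧
    (∀ t : ℝ, g 0 ^ (s / 2) / (C * s) ≤ t → g t = 0) ∧
    Filter.Tendsto g Filter.atTop (nhds 0) := by
  have hs0 : 0 < s := hs.1
  have key := fun t (ht : 0 ≤ t) ↦
    rpow_le_max_sub_mul_of_deriv_le_neg_rpow hs0 hC.le hg hgnonneg hineq ht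
  have extinct : ∀ t, g 0 ^ (s / 2) / (C * s) ≤ t → g t = 0 := by
    intro t ht
    have hCs : 0 < C * s := mul_pos hC hs0
    have ht0 : 0 ≤ t := (div_nonneg (Real.rpow_nonneg (hgnonneg 0 le_rfl) _) hCs.le).trans ht
    have hlin : g 0 ^ (s / 2) - C * s * t ≤ 0 := by
      rw [div_le_iff₀ hCs] at ht
      linarith
    have hrpow : g t ^ (s / 2) ≤ 0 := max_eq_right hlin ▸ key t ht0
    exact (Real.rpow_eq_zero (hgnonneg t ht0) (by positivity)).mp
      (hrpow.antisymm (Real.rpow_nonneg (hgnonneg t ht0) _))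
  refine ⟨fun t ht ↦ ?_, extinct, ?_⟩
  · rw [← inv_div s 2, Real.le_rpow_inv_iff_of_pos (hgnonneg t ht) (le_max_right _ _) (by positivity)]
    exact key t ht
  · refine tendsto_const_nhds.congr' ?_
    filter_upwards [Filter.Ici_mem_atTop (g 0 ^ (s / 2) / (C * s))] with t ht
    exact (extinct t ht).symm
end

section
/- For every r > 0, | 1/(1+r²) − arctan(r)/r | + arctan(r)/r ≤ 4·√( min( 1/(1+r²), arctan(r)/r ) ). -/
/-!
Put `θ = arctan r ∈ (0, π/2)`, so that `sin θ = r / √(1 + r²)` and `cos θ = 1 / √(1 + r²)`.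
From `sin θ ≤ θ` one gets `ψ'(r) = 1/(1 + r²) ≤ ψ(r)/r`, so the minimum is `cos² θ` and the left
side is at most `2 θ / r`; Jordan's inequality `θ ≤ (π/2) sin θ` bounds this by `π cos θ ≤ 4 cos θ`.
-/

open Real

lemma div_one_add_sq_le_arctan {r : ℝ} (hr : 0 ≤ r) : r / (1 + r ^ 2) ≤ arctan r := by
  have hsqrt : √(1 + r ^ 2) ≤ 1 + r ^ 2 := sqrt_le_self_iff.2 (Or.inr (by nlinarith))
  calc r / (1 + r ^ 2) ≤ r / √(1 + r ^ 2) := div_le_div_of_nonneg_left hr (by positivity) hsqrt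
    _ = sin (arctan r) := (sin_arctan r).symm
    _ ≤ arctan r := sin_le (arctan_nonneg.2 hr)

lemma arctan_le_pi_div_two_mul {r : ℝ} (hr : 0 ≤ r) :
    arctan r ≤ π / 2 * (r / √(1 + r ^ 2)) := by
  have hjordan := mul_le_sin (arctan_nonneg.2 hr) (arctan_lt_pi_div_two r).le
  rw [sin_arctan] at hjordan
  calc arctan r = π / 2 * (2 / π * arctan r) := by field_simp
    _ ≤ π / 2 * (r / √(1 + r ^ 2)) := by gcongr

/-- The curve shortening flow nonlinearity `ψ(r) = arctan r` satisfies condition (C7)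
with constant `M = 4`. -/
theorem stmt13 :
    ∀ r : ℝ, 0 < r →
      |1 / (1 + r ^ 2) - Real.arctan r / r| + Real.arctan r / r
        ≤ 4 * Real.sqrt (min (1 / (1 + r ^ 2)) (Real.arctan r / r)) := by
  intro r hr
  have hlower : 1 / (1 + r ^ 2) ≤ arctan r / r := by
    rw [le_div_iff₀ hr, one_div_mul_eq_div]
    exact div_one_add_sq_le_arctan hr.le
  have hupper : arctan r / r ≤ 2 * (1 / √(1 + r ^ 2)) := by
    rw [div_le_iff₀ hr]
    calc arctan r ≤ π / 2 * (r / √(1 + r ^ 2)) := arctan_le_pi_div_two_mul hr.le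
      _ ≤ 2 * (r / √(1 + r ^ 2)) := by gcongr; linarith [pi_le_four]
      _ = 2 * (1 / √(1 + r ^ 2)) * r := by ring
  rw [min_eq_left hlower, abs_of_nonpos (sub_nonpos.2 hlower), sqrt_div' _ (by positivity),
    sqrt_one]
  have : 0 ≤ 1 / (1 + r ^ 2) := by positivity
  linarith
end

section
/- For every r > 0, | 1/(1+r) − log(1+r)/r | + log(1+r)/r ≤ 2·√( min( 1/(1+r), log(1+r)/r ) ). -/
/-!
Writing `L = log (1 + r) / r`, the elementary bounds `r / (1 + r) ≤ log (1 + r) ≤ r / √(1 + r)`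
give `1 / (1 + r) ≤ L ≤ 1 / √(1 + r)`. Hence the minimum is `1 / (1 + r)`, the left-hand side equals
`2 L - 1 / (1 + r) ≤ 2 L`, and `2 L ≤ 2 / √(1 + r) = 2 √(1 / (1 + r))`.
-/

open Real

namespace Real

lemma log_le_sub_inv_div_two {x : ℝ} (hx : 1 ≤ x) : log x ≤ (x - x⁻¹) / 2 := by
  rw [← sinh_log (by positivity)]
  exact self_le_sinh_iff.2 (log_nonneg hx)

lemma log_le_sub_one_div_sqrt {x : ℝ} (hx : 1 ≤ x) : log x ≤ (x - 1) / √x := by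
  have hs : 0 < √x := sqrt_pos.2 (by linarith)
  have h := log_le_sub_inv_div_two (one_le_sqrt.2 hx)
  rw [log_sqrt (by linarith)] at h
  calc log x ≤ √x - (√x)⁻¹ := by linarith
    _ = (x - 1) / √x := by field_simp; rw [sq_sqrt (by linarith)]

lemma one_div_one_add_le_log_one_add_div {x : ℝ} (hx : 0 < x) :
    1 / (1 + x) ≤ log (1 + x) / x := by
  have h := one_sub_inv_le_log_of_pos (show 0 < 1 + x by linarith)
  rw [le_div_iff₀ hx]
  calc 1 / (1 + x) * x = 1 - (1 + x)⁻¹ := by field_simp; ring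
    _ ≤ log (1 + x) := h

lemma log_one_add_div_le_one_div_sqrt {x : ℝ} (hx : 0 < x) :
    log (1 + x) / x ≤ 1 / √(1 + x) := by
  have h := log_le_sub_one_div_sqrt (show 1 ≤ 1 + x by linarith)
  rw [add_sub_cancel_left] at h
  rw [div_le_iff₀ hx, div_mul_eq_mul_div, one_mul]
  exact h

end Real

/-- The logarithmic diffusion nonlinearity `ψ(r) = log(1+|r|)·sgn(r)` satisfies
condition (C7) with constant `M = 2`. -/
theorem stmt14 :
    ∀ r : ℝ, 0 < r →
      |1 / (1 + r) - Real.log (1 + r) / r| + Real.log (1 + r) / r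
        ≤ 2 * Real.sqrt (min (1 / (1 + r)) (Real.log (1 + r) / r)) := by
  intro r hr
  have hlow := one_div_one_add_le_log_one_add_div hr
  have hup := log_one_add_div_le_one_div_sqrt hr
  have hpos : 0 < 1 / (1 + r) := by positivity
  rw [min_eq_left hlow, abs_of_nonpos (sub_nonpos.2 hlow), sqrt_div zero_le_one, sqrt_one]
  linarith
end
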